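/- arXiv:1906.09211 — 3 statements merged into one kernel-verified Lean document; each statement's English description precedes it below -/
import Mathlib

section
/- Suppose the system x_{t+1} = f(x_t, u_t) is uniformly asymptotically incrementally stable on a positively invariant set X with class-KL function β, i.e., ‖φ^u_{s,t}(ξ) − φ^u_{s,t}(ξ')‖ ≤ β(‖ξ − ξ'‖, t − s) for all inputs u in M, ξ, ξ' ∈ X, and 0 ≤ s ≤ t. Then for any two input sequences u, ũ in M, any ξ ∈ X, and any t ∈ ℕ: ‖φ^u_{0,t}(ξ) − φ^{ũ}_{0,t}(ξ)‖ ≤ Σ_{s=0}^{t−1} β(‖f(x̃_s, u_s) − f(x̃_s, ũ_s)‖, t − s − 1), where x̃_s = φ^{ũ}_{0,s}(ξ). -/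
/-!
Interpolate between the two trajectories by the switched states `z s`, obtained by following
`v` up to time `s` and `u` afterwards, so that `z 0 = φ^u_{0,t}(ξ)` and `z t = φ^v_{0,t}(ξ)`.
The states `z s` and `z (s + 1)` are both `u`-trajectories from time `s + 1`, started at
`f(x̃_s, u_s)` and `f(x̃_s, v_s)` respectively, so incremental stability bounds their distance
by the `s`-th summand, and the triangle inequality along `z` gives the estimate.
-/

open scoped BigOperators

/-- The state at time `s + k` of the system `x_{t+1} = f(x_t, u_t)` started from `ξ` at time `s`.
Thus `φ^u_{s,t}(ξ) = phi f u s ξ (t - s)` for `s ≤ t`. -/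
def phi {α : Type*} (f : α → ℝ → α) (u : ℕ → ℝ) (s : ℕ) (ξ : α) : ℕ → α
  | 0 => ξ
  | k + 1 => f (phi f u s ξ k) (u (s + k))

section Trajectory

variable {α : Type*} (f : α → ℝ → α)

theorem phi_succ_eq_phi_shift (u : ℕ → ℝ) (s : ℕ) (ξ : α) :
    ∀ k, phi f u s ξ (k + 1) = phi f u (s + 1) (f ξ (u s)) k
  | 0 => rfl
  | k + 1 => by
    change f (phi f u s ξ (k + 1)) (u (s + (k + 1))) =
      f (phi f u (s + 1) (f ξ (u s)) k) (u (s + 1 + k))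
    rw [phi_succ_eq_phi_shift u s ξ k, Nat.add_comm k 1, ← Nat.add_assoc]

theorem phi_zero_succ (u : ℕ → ℝ) (ξ : α) (s : ℕ) :
    phi f u 0 ξ (s + 1) = f (phi f u 0 ξ s) (u s) := by
  simp only [phi, Nat.zero_add]

def switchedState (u v : ℕ → ℝ) (ξ : α) (t s : ℕ) : α :=
  phi f u s (phi f v 0 ξ s) (t - s)

variable {f} {u v : ℕ → ℝ} {ξ : α} {t s : ℕ}

theorem switchedState_zero : switchedState f u v ξ t 0 = phi f u 0 ξ t := rfl

theorem switchedState_self : switchedState f u v ξ t t = phi f v 0 ξ t := by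
  simp only [switchedState, Nat.sub_self, phi]

theorem switchedState_of_lt (hs : s < t) :
    switchedState f u v ξ t s = phi f u (s + 1) (f (phi f v 0 ξ s) (u s)) (t - s - 1) := by
  rw [switchedState, show t - s = t - s - 1 + 1 by omega, phi_succ_eq_phi_shift,
    Nat.add_sub_cancel]

theorem switchedState_succ :
    switchedState f u v ξ t (s + 1) = phi f u (s + 1) (f (phi f v 0 ξ s) (v s)) (t - s - 1) := by
  rw [switchedState, phi_zero_succ, Nat.sub_add_eq]

end Trajectory

theorem dist_phi_le_sum_of_incrementallyStable {α : Type*} [PseudoMetricSpace α]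
    (f : α → ℝ → α) (M : Set (ℕ → ℝ)) (X : Set α) (β : ℝ → ℕ → ℝ)
    (hInv : ∀ u ∈ M, ∀ ξ ∈ X, ∀ s k, phi f u s ξ k ∈ X)
    (hStable : ∀ u ∈ M, ∀ ξ ∈ X, ∀ ξ' ∈ X, ∀ s k,
      dist (phi f u s ξ k) (phi f u s ξ' k) ≤ β (dist ξ ξ') k)
    {u v : ℕ → ℝ} (hu : u ∈ M) (hv : v ∈ M) {ξ : α} (hξ : ξ ∈ X) (t : ℕ) :
    dist (phi f u 0 ξ t) (phi f v 0 ξ t) ≤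
      ∑ s ∈ Finset.range t,
        β (dist (f (phi f v 0 ξ s) (u s)) (f (phi f v 0 ξ s) (v s))) (t - s - 1) := by
  have hStep : ∀ w ∈ M, ∀ s, f (phi f v 0 ξ s) (w s) ∈ X := fun w hw s =>
    hInv w hw _ (hInv v hv ξ hξ 0 s) s 1
  rw [← switchedState_zero (v := v), ← switchedState_self (u := u)]
  refine (dist_le_range_sum_dist _ t).trans (Finset.sum_le_sum fun s hs => ?_)
  rw [switchedState_of_lt (Finset.mem_range.mp hs), switchedState_succ]
  exact hStable u hu _ (hStep u hu s) _ (hStep v hv s) (s + 1) (t - s - 1)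

theorem incremental_stability_error_estimate_general {n : ℕ}
    (f : EuclideanSpace ℝ (Fin n) → ℝ → EuclideanSpace ℝ (Fin n))
    (M : Set (ℕ → ℝ)) (X : Set (EuclideanSpace ℝ (Fin n)))
    (β : ℝ → ℕ → ℝ)
    -- X is positively invariant for inputs in M
    (hInv : ∀ u ∈ M, ∀ ξ ∈ X, ∀ s k, phi f u s ξ k ∈ X)
    -- uniform asymptotic incremental stability
    (hUAIS : ∀ u ∈ M, ∀ ξ ∈ X, ∀ ξ' ∈ X, ∀ s k,
      ‖phi f u s ξ k - phi f u s ξ' k‖ ≤ β (‖ξ - ξ'‖) k) :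
    ∀ u ∈ M, ∀ v ∈ M, ∀ ξ ∈ X, ∀ t : ℕ,
      ‖phi f u 0 ξ t - phi f v 0 ξ t‖ ≤
        ∑ s ∈ Finset.range t,
          β (‖f (phi f v 0 ξ s) (u s) - f (phi f v 0 ξ s) (v s)‖) (t - s - 1) := by
  intro u hu v hv ξ hξ t
  simp only [← dist_eq_norm] at hUAIS ⊢
  exact dist_phi_le_sum_of_incrementallyStable f M X β hInv hUAIS hu hv hξ t

/-- If the system is uniformly asymptotically incrementally stable on a positively
invariant set `X` with class-KL function `β`, then the trajectories from the same initial
condition `ξ ∈ X` under two inputs `u, v ∈ M` satisfy the error estimate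
`‖φ^u_{0,t}(ξ) − φ^{v}_{0,t}(ξ)‖ ≤ Σ_{s=0}^{t−1} β(‖f(x̃_s,u_s) − f(x̃_s,v_s)‖, t−s−1)`. -/
theorem incremental_stability_error_estimate {n : ℕ}
    (f : EuclideanSpace ℝ (Fin n) → ℝ → EuclideanSpace ℝ (Fin n))
    (M : Set (ℕ → ℝ)) (X : Set (EuclideanSpace ℝ (Fin n)))
    (β : ℝ → ℕ → ℝ)
    -- class-KL-type properties of β (discrete time)
    (hβ_nonneg : ∀ c k, 0 ≤ c → 0 ≤ β c k)
    (hβ_zero : ∀ k, β 0 k = 0)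
    (hβ_mono : ∀ k, StrictMonoOn (fun c => β c k) (Set.Ici (0 : ℝ)))
    (hβ_anti : ∀ c, 0 ≤ c → Antitone (fun k => β c k))
    (hβ_lim : ∀ c, 0 ≤ c → Filter.Tendsto (fun k => β c k) Filter.atTop (nhds 0))
    -- X is positively invariant for inputs in M
    (hInv : ∀ u ∈ M, ∀ ξ ∈ X, ∀ s k, phi f u s ξ k ∈ X)
    -- uniform asymptotic incremental stability
    (hUAIS : ∀ u ∈ M, ∀ ξ ∈ X, ∀ ξ' ∈ X, ∀ s k,
      ‖phi f u s ξ k - phi f u s ξ' k‖ ≤ β (‖ξ - ξ'‖) k) :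
    ∀ u ∈ M, ∀ v ∈ M, ∀ ξ ∈ X, ∀ t : ℕ,
      ‖phi f u 0 ξ t - phi f v 0 ξ t‖ ≤
        ∑ s ∈ Finset.range t,
          β (‖f (phi f v 0 ξ s) (u s) - f (phi f v 0 ξ s) (v s)‖) (t - s - 1) :=
  incremental_stability_error_estimate_general f M X β hInv hUAIS
end

section
/- Let f : ℝ^n × ℝ → ℝ^n with f(x,u) differentiable in x on a convex set X, and suppose there is a symmetric positive definite matrix P and μ ∈ (0,1) such that (∂f/∂x)(x,u)ᵀ P (∂f/∂x)(x,u) ⪯ μ P for all x ∈ X, u ∈ U. Then for all ξ, ξ' ∈ X and u ∈ U: (f(ξ,u) − f(ξ',u))ᵀ P (f(ξ,u) − f(ξ',u)) ≤ μ (ξ − ξ')ᵀ P (ξ − ξ'). -/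
/-!
Write `P = S²` with `S = √P` symmetric, so that `xᵀ P x = ‖S x‖²`. The Loewner inequality then
says `‖S J v‖ ≤ √μ ‖S v‖` for every Jacobian `J = ∂f/∂x (x,u)` with `x ∈ X`, and the mean value
inequality along the segment `[ξ', ξ] ⊆ X`, applied to `S ∘ f(·,u)`, gives
`‖S (f(ξ,u) − f(ξ',u))‖ ≤ √μ ‖S (ξ − ξ')‖`; squaring is the claim.
-/

open Matrix

/-- The quadratic form `x ↦ xᵀ P x` on Euclidean space. -/
noncomputable def quadP {n : ℕ} (P : Matrix (Fin n) (Fin n) ℝ)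
    (x : EuclideanSpace ℝ (Fin n)) : ℝ :=
  (WithLp.equiv 2 (Fin n → ℝ) x) ⬝ᵥ P.mulVec (WithLp.equiv 2 (Fin n → ℝ) x)

theorem Convex.norm_image_sub_le_of_norm_hasFDerivWithin_apply_le
    {E F : Type*} [NormedAddCommGroup E] [NormedSpace ℝ E] [NormedAddCommGroup F]
    [NormedSpace ℝ F] {f : E → F} {f' : E → E →L[ℝ] F} {s : Set E} {x y : E} {C : ℝ}
    (hs : Convex ℝ s) (hf : ∀ z ∈ s, HasFDerivWithinAt f (f' z) s z)
    (bound : ∀ z ∈ s, ‖f' z (y - x)‖ ≤ C) (hx : x ∈ s) (hy : y ∈ s) :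
    ‖f y - f x‖ ≤ C := by
  set g := (AffineMap.lineMap x y : ℝ → E)
  have segm : Set.MapsTo g (Set.Icc 0 1) s := hs.mapsTo_lineMap hx hy
  have hD : ∀ t ∈ Set.Icc (0 : ℝ) 1,
      HasDerivWithinAt (f ∘ g) (f' (g t) (y - x)) (Set.Icc 0 1) t := fun t ht => by
    simpa using (hf (g t) (segm ht)).comp_hasDerivWithinAt _
      AffineMap.hasDerivWithinAt_lineMap segm
  simpa [g] using norm_image_sub_le_of_norm_deriv_le_segment_01' hD
    fun t ht => bound _ (segm (Set.Ico_subset_Icc_self ht))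

section quadP

variable {n : ℕ}

lemma quadP_toEuclideanCLM (P A : Matrix (Fin n) (Fin n) ℝ) (v : EuclideanSpace ℝ (Fin n)) :
    quadP P (toEuclideanCLM (𝕜 := ℝ) A v) = quadP (Aᵀ * P * A) v := by
  simp only [quadP, WithLp.equiv_apply, ofLp_toEuclideanCLM, ← mulVec_mulVec,
    dotProduct_mulVec _ Aᵀ, vecMul_transpose]

lemma quadP_one (v : EuclideanSpace ℝ (Fin n)) : quadP 1 v = ‖v‖ ^ 2 := by
  rw [← real_inner_self_eq_norm_sq, EuclideanSpace.inner_eq_star_dotProduct, quadP, one_mulVec]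
  simp

lemma quadP_smul (c : ℝ) (P : Matrix (Fin n) (Fin n) ℝ) (v : EuclideanSpace ℝ (Fin n)) :
    quadP (c • P) v = c * quadP P v := by
  simp only [quadP, smul_mulVec, dotProduct_smul, smul_eq_mul]

lemma quadP_le_of_posSemidef_sub {P Q : Matrix (Fin n) (Fin n) ℝ} (h : (P - Q).PosSemidef)
    (v : EuclideanSpace ℝ (Fin n)) : quadP Q v ≤ quadP P v := by
  have := h.dotProduct_mulVec_nonneg (WithLp.equiv 2 (Fin n → ℝ) v)
  rwa [star_trivial, sub_mulVec, dotProduct_sub, sub_nonneg] at this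

open scoped MatrixOrder in
lemma Matrix.PosSemidef.exists_quadP_eq_norm_sq {P : Matrix (Fin n) (Fin n) ℝ} (hP : P.PosSemidef) :
    ∃ S : Matrix (Fin n) (Fin n) ℝ, ∀ v, quadP P v = ‖toEuclideanCLM (𝕜 := ℝ) S v‖ ^ 2 := by
  refine ⟨CFC.sqrt P, fun v => ?_⟩
  have hsymm : (CFC.sqrt P)ᵀ = CFC.sqrt P := by
    simpa using (CFC.sqrt_nonneg P).posSemidef.1.eq
  rw [← quadP_one, quadP_toEuclideanCLM, hsymm, Matrix.mul_one,
    CFC.sqrt_mul_sqrt_self P hP.nonneg]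

end quadP

/-- If the Jacobian `J(x,u) = ∂f/∂x (x,u)` satisfies the Loewner inequality
`J(x,u)ᵀ P J(x,u) ⪯ μ P` on a convex set `X` for all `u ∈ U`, then
`(f(ξ,u) − f(ξ',u))ᵀ P (f(ξ,u) − f(ξ',u)) ≤ μ (ξ − ξ')ᵀ P (ξ − ξ')` for `ξ, ξ' ∈ X`, `u ∈ U`. -/
theorem demidovich_one_step {n : ℕ}
    (f : EuclideanSpace ℝ (Fin n) → ℝ → EuclideanSpace ℝ (Fin n))
    (X : Set (EuclideanSpace ℝ (Fin n))) (U : Set ℝ)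
    (hX : Convex ℝ X)
    (J : EuclideanSpace ℝ (Fin n) → ℝ → Matrix (Fin n) (Fin n) ℝ)
    (P : Matrix (Fin n) (Fin n) ℝ) (hP : P.PosDef)
    (μ : ℝ) (hμ : μ ∈ Set.Ioo (0 : ℝ) 1)
    -- `f(·,u)` is differentiable in `x` on `X` with Jacobian `J(x,u)`
    (hder : ∀ x ∈ X, ∀ u ∈ U,
      HasFDerivAt (fun y => f y u) (Matrix.toEuclideanCLM (𝕜 := ℝ) (J x u)) x)
    -- Loewner inequality `J(x,u)ᵀ P J(x,u) ⪯ μ P`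
    (hLoewner : ∀ x ∈ X, ∀ u ∈ U, (μ • P - (J x u)ᵀ * P * (J x u)).PosSemidef) :
    ∀ ξ ∈ X, ∀ ξ' ∈ X, ∀ u ∈ U,
      quadP P (f ξ u - f ξ' u) ≤ μ * quadP P (ξ - ξ') := by
  intro ξ hξ ξ' hξ' u hu
  obtain ⟨S, hS⟩ := hP.posSemidef.exists_quadP_eq_norm_sq
  set T := toEuclideanCLM (𝕜 := ℝ) (n := Fin n)
  have hJ : ∀ x ∈ X, ∀ v, ‖T S (T (J x u) v)‖ ≤ √μ * ‖T S v‖ := fun x hx v => by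
    rw [← Real.sqrt_sq (norm_nonneg _), ← Real.sqrt_sq (norm_nonneg (T S v)),
      ← Real.sqrt_mul hμ.1.le, ← hS, ← hS, quadP_toEuclideanCLM, ← quadP_smul]
    exact Real.sqrt_le_sqrt (quadP_le_of_posSemidef_sub (hLoewner x hx u hu) v)
  have hmvi := hX.norm_image_sub_le_of_norm_hasFDerivWithin_apply_le
    (f := fun y => T S (f y u)) (f' := fun x => T S ∘L T (J x u))
    (fun x hx => ((T S).hasFDerivAt.comp x (hder x hx u hu)).hasFDerivWithinAt)
    (fun x hx => hJ x hx (ξ - ξ')) hξ' hξ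
  rw [← map_sub] at hmvi
  rw [hS, hS, ← Real.sq_sqrt hμ.1.le, ← mul_pow]
  exact pow_le_pow_left₀ (norm_nonneg _) hmvi 2
end

section
/- Approximation decomposition: let F be a causal time-invariant i/o map with approximately finite memory on M(R), let ε > 0, γ ∈ (0,1), m = m*_F(γε), and suppose f̂ : ℝ^{m+1} → ℝ satisfies sup_{x ∈ [−R,R]^{m+1}} |F̃_m(x) − f̂(x)| < (1−γ)ε. Define (F̂u)_t = f̂(u_{t−m},…,u_t) (with u_s = 0 for s < 0). Then sup_{u ∈ M(R)} sup_{t ∈ ℕ} |(Fu)_t − (F̂u)_t| < ε. -/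
/-!
By time invariance, the windowed input `W_{t,m} u` observed at time `t` is a shift of the
zero-padded vector `x` of the last `m + 1` inputs observed at time `m`, so
`F (W_{t,m} u) t = F̃_m x`. The triangle inequality through `F (W_{t,m} u) t` then splits the
error into at most `γε` (finite memory) and less than `(1 − γ)ε` (the approximation `f̂`).
-/

/-- The windowing operator `(W_{t,m} u)_τ = u_τ` if `max(t−m,0) ≤ τ ≤ t`, else `0`. -/
def window (t m : ℕ) (u : ℕ → ℝ) : ℕ → ℝ :=
  fun τ => if t - m ≤ τ ∧ τ ≤ t then u τ else 0

/-- The functional `F̃_t : ℝ^{t+1} → ℝ` induced by a causal i/o map `F`. -/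
def tildeF (F : (ℕ → ℝ) → ℕ → ℝ) (t : ℕ) (x : Fin (t + 1) → ℝ) : ℝ :=
  F (fun s => if h : s < t + 1 then x ⟨s, h⟩ else 0) t

section

variable {α : Type*} [Zero α]

def shiftRight (k : ℕ) (u : ℕ → α) : ℕ → α :=
  fun τ => if k ≤ τ then u (τ - k) else 0

def extendByZero {n : ℕ} (x : Fin n → α) : ℕ → α :=
  fun s => if h : s < n then x ⟨s, h⟩ else 0

/-- Entry `i` is `u_{t−m+i}`, read as `0` when `t − m + i < 0`. -/
def tcnInput (m t : ℕ) (u : ℕ → α) : Fin (m + 1) → α :=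
  fun i => if m ≤ t + (i : ℕ) then u (t + (i : ℕ) - m) else 0

end

lemma window_eq_shiftRight_extendByZero {m t : ℕ} (h : m ≤ t) (u : ℕ → ℝ) :
    window t m u = shiftRight (t - m) (extendByZero (tcnInput m t u)) := by
  funext τ
  simp only [window, shiftRight, extendByZero, tcnInput]
  split_ifs <;> first | rfl | omega | (congr 1; omega)

lemma shiftRight_window_eq_extendByZero {m t : ℕ} (h : t < m) (u : ℕ → ℝ) :
    shiftRight (m - t) (window t m u) = extendByZero (tcnInput m t u) := by
  funext τ
  simp only [window, shiftRight, extendByZero, tcnInput]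
  split_ifs <;> first | rfl | omega | (congr 1; omega)

lemma apply_window_eq_tildeF {F : (ℕ → ℝ) → ℕ → ℝ}
    (hTI : ∀ k u t, F (shiftRight k u) t = if k ≤ t then F u (t - k) else 0)
    (m t : ℕ) (u : ℕ → ℝ) :
    F (window t m u) t = tildeF F m (tcnInput m t u) := by
  rcases le_or_gt m t with h | h
  · rw [window_eq_shiftRight_extendByZero h, hTI, if_pos (Nat.sub_le t m), Nat.sub_sub_self h]
    rfl
  · -- for `t < m` the window is shifted right by `m - t` instead
    have := hTI (m - t) (window t m u) m
    rw [shiftRight_window_eq_extendByZero h, if_pos (Nat.sub_le m t),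
      Nat.sub_sub_self h.le] at this
    exact this.symm

lemma abs_tcnInput_le {R : ℝ} (hR : 0 ≤ R) {u : ℕ → ℝ} (hu : ∀ τ, |u τ| ≤ R) (m t : ℕ)
    (i : Fin (m + 1)) : |tcnInput m t u i| ≤ R := by
  unfold tcnInput
  split_ifs
  · exact hu _
  · simpa using hR

theorem tcn_approximation_decomposition_general
    (F : (ℕ → ℝ) → ℕ → ℝ) (R ε γ : ℝ) (hR : 0 < R) (m : ℕ)
    -- time invariance (with respect to the right shift with zero padding)
    (hTI : ∀ k : ℕ, ∀ u : ℕ → ℝ, ∀ t : ℕ,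
      F (fun τ => if k ≤ τ then u (τ - k) else 0) t = if k ≤ t then F u (t - k) else 0)
    -- m = m*_F(γε): approximately finite memory at level γε
    (hm : ∀ u : ℕ → ℝ, (∀ τ, |u τ| ≤ R) → ∀ t : ℕ,
      |F u t - F (window t m u) t| ≤ γ * ε)
    (fhat : (Fin (m + 1) → ℝ) → ℝ)
    -- f̂ approximates F̃_m on the cube within (1−γ)ε
    (hfhat : ∀ x : Fin (m + 1) → ℝ, (∀ i, |x i| ≤ R) →
      |tildeF F m x - fhat x| < (1 - γ) * ε) :
    ∀ u : ℕ → ℝ, (∀ τ, |u τ| ≤ R) → ∀ t : ℕ,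
      |F u t -
        fhat (fun i : Fin (m + 1) => if m ≤ t + (i : ℕ) then u (t + (i : ℕ) - m) else 0)| < ε := by
  intro u hu t
  have hmemory := hm u hu t
  have happrox := hfhat (tcnInput m t u) (abs_tcnInput_le hR.le hu m t)
  rw [← apply_window_eq_tildeF hTI] at happrox
  calc |F u t - fhat (tcnInput m t u)|
      ≤ |F u t - F (window t m u) t| + |F (window t m u) t - fhat (tcnInput m t u)| :=
        abs_sub_le _ _ _
    _ < γ * ε + (1 - γ) * ε := add_lt_add_of_le_of_lt hmemory happrox
    _ = ε := by ring

/-- Approximation decomposition: if `F` is causal and time-invariant, `m = m*_F(γε)`, and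
`f̂ : ℝ^{m+1} → ℝ` approximates `F̃_m` on `[−R,R]^{m+1}` within `(1−γ)ε`, then the TCN
`(F̂u)_t = f̂(u_{t−m},…,u_t)` (with `u_s = 0` for `s < 0`) approximates `F` within `ε`
uniformly over `M(R)` and all times. -/
theorem tcn_approximation_decomposition
    (F : (ℕ → ℝ) → ℕ → ℝ) (R ε γ : ℝ) (hR : 0 < R) (hε : 0 < ε)
    (hγ : γ ∈ Set.Ioo (0 : ℝ) 1) (m : ℕ)
    -- causality
    (hC : ∀ u v : ℕ → ℝ, ∀ t : ℕ, (∀ s ≤ t, u s = v s) → F u t = F v t)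
    -- time invariance (with respect to the right shift with zero padding)
    (hTI : ∀ k : ℕ, ∀ u : ℕ → ℝ, ∀ t : ℕ,
      F (fun τ => if k ≤ τ then u (τ - k) else 0) t = if k ≤ t then F u (t - k) else 0)
    -- m = m*_F(γε): approximately finite memory at level γε
    (hm : ∀ u : ℕ → ℝ, (∀ τ, |u τ| ≤ R) → ∀ t : ℕ,
      |F u t - F (window t m u) t| ≤ γ * ε)
    (fhat : (Fin (m + 1) → ℝ) → ℝ)
    -- f̂ approximates F̃_m on the cube within (1−γ)ε
    (hfhat : ∀ x : Fin (m + 1) → ℝ, (∀ i, |x i| ≤ R) →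
      |tildeF F m x - fhat x| < (1 - γ) * ε) :
    ∀ u : ℕ → ℝ, (∀ τ, |u τ| ≤ R) → ∀ t : ℕ,
      |F u t -
        fhat (fun i : Fin (m + 1) => if m ≤ t + (i : ℕ) then u (t + (i : ℕ) - m) else 0)| < ε :=
  tcn_approximation_decomposition_general F R ε γ hR m hTI hm fhat hfhat
end
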